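/- (Identifiability engine for GHD DAG models.) Let μ be a probability mass function on a countable set Z, let θ : Z → (0, ∞), and for each z ∈ Z let p_z be a probability mass function on the nonnegative integers following GHD(a, b, θ(z)), where the positive parameter vectors a = (a_1, …, a_P) and b = (b_1, …, b_Q) do not depend on z. Let q(k) := ∑_{z∈Z} μ(z) p_z(k) be the mixture. Let r ≥ 2 be an integer with ∑_{z∈Z} μ(z) θ(z)^r < ∞, and suppose there exist z, z′ ∈ Z with μ(z) > 0, μ(z′) > 0 and θ(z) ≠ θ(z′). Then ∑_{k≥0} (k)_r · q(k) > (∑_{k≥0} k · q(k))^r · ∏_{i=1}^P (⟨a_i⟩^r / a_i^r) · ∏_{l=1}^Q (b_l^r / ⟨b_l⟩^r); that is, the r-th factorial moment of the mixture strictly exceeds f^{(r)} evaluated at its mean, where f^{(r)}(x) = x^r ∏_i (⟨a_i⟩^r / a_i^r) ∏_l (b_l^r / ⟨b_l⟩^r). -/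

import Mathlib

/-!
Expanding the pgf of `GHD(a, b, θ)` around `s = 1` shows that its `n`-th factorial moment is
`c n * θ ^ n`, where `c n = ∏ ⟨aᵢ⟩ⁿ / ∏ ⟨bₗ⟩ⁿ` (compare coefficients of two power series in
`s - 1`). Averaging over `μ` (Tonelli), the mixture `q` has factorial moments `c n * E_μ[θ ^ n]`;
in particular its mean is `c 1 * E_μ[θ]`, and `f⁽ʳ⁾` of the mean is `c r * (E_μ θ) ^ r`. The claim
is therefore strict Jensen `(E_μ θ) ^ r < E_μ[θ ^ r]` for the strictly convex `x ↦ x ^ r`, which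
holds because `θ` is not `μ`-almost surely constant.
-/

/-- The rising factorial `⟨a⟩^j = a (a+1) ⋯ (a+j-1)`. -/
noncomputable def risingFact (a : ℝ) (j : ℕ) : ℝ := ∏ i ∈ Finset.range j, (a + i)

/-- The `j`-th term of the generalized hypergeometric series
`(∏ᵢ ⟨aᵢ⟩^j / ∏ₗ ⟨bₗ⟩^j) · (θ(s-1))^j / j!`. -/
noncomputable def ghdSeries {P Q : ℕ} (a : Fin P → ℝ) (b : Fin Q → ℝ) (θ s : ℝ) (j : ℕ) : ℝ :=
  ((∏ i, risingFact (a i) j) / (∏ l, risingFact (b l) j)) * (θ * (s - 1)) ^ j / (j.factorial : ℝ)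

/-- A probability mass function `p` on `ℕ` follows the generalized hypergeometric
distribution `GHD(a, b, θ)` if there is some `ρ > 1` such that for every `s` with `|s| < ρ`,
both the probability generating series and the generalized hypergeometric series converge and
`∑ₖ p(k) sᵏ = ∑ⱼ (∏ᵢ ⟨aᵢ⟩^j / ∏ₗ ⟨bₗ⟩^j) (θ(s-1))^j / j!`. -/
def IsGHD {P Q : ℕ} (a : Fin P → ℝ) (b : Fin Q → ℝ) (θ : ℝ) (p : ℕ → ℝ) : Prop :=
  (∀ k, 0 ≤ p k) ∧ Summable p ∧ (∑' k, p k) = 1 ∧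
    ∃ ρ : ℝ, 1 < ρ ∧ ∀ s : ℝ, |s| < ρ →
      Summable (fun k => p k * s ^ k) ∧
      Summable (fun j => ghdSeries a b θ s j) ∧
      (∑' k, p k * s ^ k) = ∑' j, ghdSeries a b θ s j


open Finset FormalMultilinearSeries

lemma risingFact_pos {a : ℝ} (h : 0 < a) (j : ℕ) : 0 < risingFact a j :=
  prod_pos fun i _ => by positivity

lemma risingFact_one (a : ℝ) : risingFact a 1 = a := by simp [risingFact]

noncomputable def ghdCoeff {P Q : ℕ} (a : Fin P → ℝ) (b : Fin Q → ℝ) (n : ℕ) : ℝ :=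
  (∏ i, risingFact (a i) n) / ∏ l, risingFact (b l) n

section ghdCoeff

variable {P Q : ℕ} {a : Fin P → ℝ} {b : Fin Q → ℝ}

lemma ghdCoeff_pos (ha : ∀ i, 0 < a i) (hb : ∀ l, 0 < b l) (n : ℕ) : 0 < ghdCoeff a b n :=
  div_pos (prod_pos fun i _ => risingFact_pos (ha i) n)
    (prod_pos fun l _ => risingFact_pos (hb l) n)

lemma ghdCoeff_one_pow_mul (ha : ∀ i, a i ≠ 0) (hb : ∀ l, b l ≠ 0) (n : ℕ) :
    ghdCoeff a b 1 ^ n * (∏ i, risingFact (a i) n / a i ^ n)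
      * (∏ l, b l ^ n / risingFact (b l) n) = ghdCoeff a b n := by
  have hA : ∏ i, a i ≠ 0 := prod_ne_zero_iff.2 fun i _ => ha i
  have hB : ∏ l, b l ≠ 0 := prod_ne_zero_iff.2 fun l _ => hb l
  simp only [ghdCoeff, risingFact_one, prod_div_distrib, prod_pow, div_pow]
  field_simp

lemma ghdSeries_one_add (θ t : ℝ) (j : ℕ) :
    ghdSeries a b θ (1 + t) j = ghdCoeff a b j * θ ^ j / j.factorial * t ^ j := by
  simp only [ghdSeries, ghdCoeff, add_sub_cancel_left, mul_pow]
  ring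

end ghdCoeff

lemma hasSum_choose_mul_pow (k : ℕ) (t : ℝ) :
    HasSum (fun j => (k.choose j : ℝ) * t ^ j) ((1 + t) ^ k) := by
  have hzero : ∀ j ∉ range (k + 1), (k.choose j : ℝ) * t ^ j = 0 := fun j hj => by
    rw [Nat.choose_eq_zero_of_lt (by simpa using hj), Nat.cast_zero, zero_mul]
  convert hasSum_sum_of_ne_finset_zero (L := SummationFilter.unconditional ℕ) hzero using 1
  rw [add_comm, add_pow]
  exact sum_congr rfl fun j _ => by rw [one_pow, mul_one, mul_comm]

lemma summable_choose_mul_of_summable_mul_pow {p : ℕ → ℝ} (hp : ∀ k, 0 ≤ p k) {s : ℝ}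
    (hs : 1 < s) (h : Summable fun k => p k * s ^ k) (j : ℕ) :
    Summable fun k => (k.choose j : ℝ) * p k := by
  have hs1 : 0 < (s - 1) ^ j := pow_pos (sub_pos.2 hs) j
  refine Summable.of_nonneg_of_le (fun k => mul_nonneg (Nat.cast_nonneg _) (hp k))
    (fun k => ?_) (h.div_const ((s - 1) ^ j))
  have hterm : (k.choose j : ℝ) * (s - 1) ^ j ≤ s ^ k := by
    simpa using le_hasSum (hasSum_choose_mul_pow k (s - 1)) j fun i _ =>
      mul_nonneg (Nat.cast_nonneg _) (pow_nonneg (sub_pos.2 hs).le i)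
  rw [le_div_iff₀ hs1]
  nlinarith [hp k]

-- Fubini for `∑ₖ pₖ (1 + t)ᵏ = ∑ₖ ∑ⱼ pₖ C(k, j) tʲ`; `h` is the absolute convergence of the
-- double series.
lemma hasSum_tsum_choose_mul_mul_pow {p : ℕ → ℝ} (hp : ∀ k, 0 ≤ p k) {t : ℝ}
    (h : Summable fun k => p k * (1 + |t|) ^ k) :
    HasSum (fun j => (∑' k, (k.choose j : ℝ) * p k) * t ^ j) (∑' k, p k * (1 + t) ^ k) := by
  set f : ℕ → ℕ → ℝ := fun k j => p k * ((k.choose j : ℝ) * t ^ j)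
  have hrow : ∀ (u : ℝ) k, HasSum (fun j => p k * ((k.choose j : ℝ) * u ^ j)) (p k * (1 + u) ^ k) :=
    fun u k => (hasSum_choose_mul_pow k u).mul_left (p k)
  have hf : Summable (Function.uncurry f) := by
    refine Summable.of_abs ?_
    have habs : (fun x : ℕ × ℕ => |Function.uncurry f x|)
        = fun x => p x.1 * ((x.1.choose x.2 : ℝ) * |t| ^ x.2) := by
      ext ⟨k, j⟩
      simp only [f, Function.uncurry_apply_pair, abs_mul, Nat.abs_cast, abs_pow,
        abs_of_nonneg (hp k)]
    rw [habs, summable_prod_of_nonneg fun x => by have := hp x.1; positivity]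
    exact ⟨fun k => (hrow |t| k).summable, h.congr fun k => (hrow |t| k).tsum_eq.symm⟩
  have hcol : ∀ j, ∑' k, f k j = (∑' k, (k.choose j : ℝ) * p k) * t ^ j := fun j => by
    rw [← tsum_mul_right]
    exact tsum_congr fun k => by ring
  have hsum : ∑' k, ∑' j, f k j = ∑' k, p k * (1 + t) ^ k :=
    tsum_congr fun k => (hrow t k).tsum_eq
  rw [← hsum, ← hf.tsum_comm, ← funext hcol]
  exact (hf.prod_symm.prod).hasSum

lemma hasFPowerSeriesAt_ofScalars_of_hasSum {c : ℕ → ℝ} {f : ℝ → ℝ} {ε : ℝ} (hε : 0 < ε)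
    (h : ∀ t, |t| < ε → HasSum (fun j => c j * t ^ j) (f t)) :
    HasFPowerSeriesAt f (ofScalars ℝ c) 0 := by
  set δ : NNReal := ⟨ε / 2, by positivity⟩
  have hδ : (δ : ℝ) < ε := half_lt_self hε
  refine ⟨δ, ?_, ENNReal.coe_pos.2 (NNReal.coe_pos.1 (half_pos hε)), fun {y} hy => ?_⟩
  · refine le_radius_of_summable _ ((h δ (by rwa [NNReal.abs_eq])).summable.abs.congr fun n => ?_)
    rw [ofScalars_norm, Real.norm_eq_abs, abs_mul, abs_pow, NNReal.abs_eq]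
  · have hy : ‖y‖ < δ := by simpa [← ofReal_norm] using hy
    simpa [ofScalars_apply_eq, mul_comm] using h y (hy.trans hδ)

lemma eq_of_hasSum_mul_pow_of_hasSum_mul_pow {c d : ℕ → ℝ} {f : ℝ → ℝ} {ε : ℝ} (hε : 0 < ε)
    (hc : ∀ t, |t| < ε → HasSum (fun j => c j * t ^ j) (f t))
    (hd : ∀ t, |t| < ε → HasSum (fun j => d j * t ^ j) (f t)) : c = d :=
  ofScalars_series_injective ℝ ℝ <|
    (hasFPowerSeriesAt_ofScalars_of_hasSum hε hc).eq_formalMultilinearSeries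
      (hasFPowerSeriesAt_ofScalars_of_hasSum hε hd)

namespace IsGHD

variable {P Q : ℕ} {a : Fin P → ℝ} {b : Fin Q → ℝ} {θ : ℝ} {p : ℕ → ℝ}

lemma le_one (hg : IsGHD a b θ p) (k : ℕ) : p k ≤ 1 := by
  obtain ⟨hp, hsum, hone, -⟩ := hg
  exact hone ▸ hsum.le_tsum k fun j _ => hp j

lemma hasSum_choose_mul (hg : IsGHD a b θ p) (n : ℕ) :
    HasSum (fun k => (k.choose n : ℝ) * p k) (ghdCoeff a b n * θ ^ n / n.factorial) := by
  obtain ⟨hp, -, -, ρ, hρ, hpgf⟩ := hg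
  have hsmall : ∀ t, |t| < ρ - 1 → |1 + t| < ρ ∧ abs (1 + |t|) < ρ := fun t ht => by
    have : |1 + t| ≤ 1 + |t| := (abs_add_le 1 t).trans_eq (by rw [abs_one])
    exact ⟨by linarith, by rw [abs_of_nonneg (by positivity)]; linarith⟩
  have hmid : |(1 + ρ) / 2| < ρ := by rw [abs_of_pos (by linarith)]; linarith
  have hmoment := summable_choose_mul_of_summable_mul_pow hp (by linarith) (hpgf _ hmid).1 n
  suffices (fun j => ∑' k, (k.choose j : ℝ) * p k)
      = fun j => ghdCoeff a b j * θ ^ j / j.factorial by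
    exact congrFun this n ▸ hmoment.hasSum
  refine eq_of_hasSum_mul_pow_of_hasSum_mul_pow (f := fun t => ∑' k, p k * (1 + t) ^ k)
    (sub_pos.2 hρ) (fun t ht => ?_) (fun t ht => ?_)
  · exact hasSum_tsum_choose_mul_mul_pow hp (hpgf _ (hsmall t ht).2).1
  · obtain ⟨-, hsummable, hpgf_eq⟩ := hpgf _ (hsmall t ht).1
    rw [hpgf_eq]
    simpa only [ghdSeries_one_add] using hsummable.hasSum

lemma hasSum_descFactorial_mul (hg : IsGHD a b θ p) (n : ℕ) :
    HasSum (fun k => (k.descFactorial n : ℝ) * p k) (ghdCoeff a b n * θ ^ n) := by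
  have h := (hg.hasSum_choose_mul n).mul_left (n.factorial : ℝ)
  rw [mul_div_cancel₀ _ (by positivity : (n.factorial : ℝ) ≠ 0)] at h
  simpa only [Nat.descFactorial_eq_factorial_mul_choose, Nat.cast_mul, mul_assoc] using h

end IsGHD

lemma hasSum_mul_tsum_mul_of_nonneg {Z β : Type*} {μ : Z → ℝ} {p : Z → β → ℝ} {f : β → ℝ}
    {m : Z → ℝ} (hμ : ∀ z, 0 ≤ μ z) (hp : ∀ z k, 0 ≤ p z k) (hf : ∀ k, 0 ≤ f k)
    (hmix : ∀ k, Summable fun z => μ z * p z k)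
    (hm : ∀ z, HasSum (fun k => f k * p z k) (m z)) (hμm : Summable fun z => μ z * m z) :
    HasSum (fun k => f k * ∑' z, μ z * p z k) (∑' z, μ z * m z) := by
  set F : Z × β → ℝ := fun x => μ x.1 * (f x.2 * p x.1 x.2)
  have hrow : ∀ z, HasSum (fun k => F (z, k)) (μ z * m z) := fun z => (hm z).mul_left (μ z)
  have hcol : ∀ k, HasSum (fun z => F (z, k)) (f k * ∑' z, μ z * p z k) := fun k =>
    ((hmix k).hasSum.mul_left (f k)).congr_fun fun z => by simp only [F]; ring
  have hF : Summable F := by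
    rw [summable_prod_of_nonneg fun x => mul_nonneg (hμ x.1) (mul_nonneg (hf x.2) (hp x.1 x.2))]
    exact ⟨fun z => (hrow z).summable, hμm.congr fun z => (hrow z).tsum_eq.symm⟩
  have hswap : HasSum (fun x : β × Z => F x.swap) (∑' x, F x) :=
    (Equiv.prodComm β Z).hasSum_iff.2 hF.hasSum
  rw [(hF.hasSum.prod_fiberwise hrow).tsum_eq]
  exact hswap.prod_fiberwise hcol

lemma hasSum_descFactorial_mul_ghd_mixture {Z : Type*} {P Q : ℕ} {a : Fin P → ℝ}
    {b : Fin Q → ℝ} {μ θ : Z → ℝ} {p : Z → ℕ → ℝ} (hμ : ∀ z, 0 ≤ μ z) (hμsum : Summable μ)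
    (hp : ∀ z, IsGHD a b (θ z) (p z)) {n : ℕ} (hn : Summable fun z => μ z * θ z ^ n) :
    HasSum (fun k => (k.descFactorial n : ℝ) * ∑' z, μ z * p z k)
      (ghdCoeff a b n * ∑' z, μ z * θ z ^ n) := by
  have hmix : ∀ k, Summable fun z => μ z * p z k := fun k =>
    hμsum.of_nonneg_of_le (fun z => mul_nonneg (hμ z) ((hp z).1 k))
      fun z => mul_le_of_le_one_right (hμ z) ((hp z).le_one k)
  have h := hasSum_mul_tsum_mul_of_nonneg hμ (fun z => (hp z).1) (fun k => Nat.cast_nonneg _)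
    hmix (fun z => (hp z).hasSum_descFactorial_mul n)
    ((hn.mul_left (ghdCoeff a b n)).congr fun z => by ring)
  rwa [← tsum_mul_left, tsum_congr fun z => mul_left_comm (ghdCoeff a b n) (μ z) _]

lemma pow_tangent_lt_pow {m x : ℝ} (hm : 0 < m) (hx : 0 ≤ x) (hne : x ≠ m) {r : ℕ}
    (hr : 2 ≤ r) : m ^ r + r * m ^ (r - 1) * (x - m) < x ^ r := by
  have hbernoulli := one_add_mul_self_lt_rpow_one_add (s := x / m - 1)
    (by linarith [div_nonneg hx hm.le])
    (sub_ne_zero.2 fun h => hne ((div_eq_one_iff_eq hm.ne').1 h)) (Nat.one_lt_cast.2 hr)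
  rw [add_sub_cancel, Real.rpow_natCast, div_pow] at hbernoulli
  obtain ⟨k, rfl⟩ : ∃ k, r = k + 1 := ⟨r - 1, by omega⟩
  calc m ^ (k + 1) + ↑(k + 1) * m ^ (k + 1 - 1) * (x - m)
      = m ^ (k + 1) * (1 + ↑(k + 1) * (x / m - 1)) := by
        rw [Nat.add_sub_cancel]; field_simp; ring
    _ < m ^ (k + 1) * (x ^ (k + 1) / m ^ (k + 1)) :=
        mul_lt_mul_of_pos_left hbernoulli (by positivity)
    _ = x ^ (k + 1) := mul_div_cancel₀ _ (by positivity)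

lemma pow_tangent_le_pow {m x : ℝ} (hm : 0 < m) (hx : 0 ≤ x) {r : ℕ} (hr : 2 ≤ r) :
    m ^ r + r * m ^ (r - 1) * (x - m) ≤ x ^ r := by
  rcases eq_or_ne x m with rfl | hne
  · simp
  · exact (pow_tangent_lt_pow hm hx hne hr).le

section Jensen

variable {Z : Type*} {μ θ : Z → ℝ}

lemma summable_mul_pow_of_le (hμ : ∀ z, 0 ≤ μ z) (hθ : ∀ z, 0 ≤ θ z) (hμsum : Summable μ)
    {n r : ℕ} (hnr : n ≤ r) (hr : Summable fun z => μ z * θ z ^ r) :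
    Summable fun z => μ z * θ z ^ n := by
  refine (hμsum.add hr).of_nonneg_of_le (fun z => mul_nonneg (hμ z) (pow_nonneg (hθ z) n))
    fun z => ?_
  have hpow : θ z ^ n ≤ 1 + θ z ^ r := by
    rcases le_total (θ z) 1 with h | h
    · linarith [pow_le_one₀ (hθ z) h (n := n), pow_nonneg (hθ z) r]
    · linarith [pow_le_pow_right₀ h hnr]
  calc μ z * θ z ^ n ≤ μ z * (1 + θ z ^ r) := mul_le_mul_of_nonneg_left hpow (hμ z)
    _ = μ z + μ z * θ z ^ r := by ring

lemma pow_tsum_mul_lt_tsum_mul_pow (hμ : ∀ z, 0 ≤ μ z) (hμ1 : HasSum μ 1) (hθ : ∀ z, 0 ≤ θ z)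
    (h1 : Summable fun z => μ z * θ z) {r : ℕ} (hr : 2 ≤ r)
    (hrsum : Summable fun z => μ z * θ z ^ r) (hnd : ∃ z z', 0 < μ z ∧ 0 < μ z' ∧ θ z ≠ θ z') :
    (∑' z, μ z * θ z) ^ r < ∑' z, μ z * θ z ^ r := by
  obtain ⟨z₀, z₁, hz₀, hz₁, hne⟩ := hnd
  set m := ∑' z, μ z * θ z
  have hm : 0 < m := by
    obtain ⟨w, hμw, hθw⟩ : ∃ w, 0 < μ w ∧ 0 < θ w := by
      rcases (hθ z₀).lt_or_eq with h | h
      · exact ⟨z₀, hz₀, h⟩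
      · exact ⟨z₁, hz₁, (hθ z₁).lt_of_ne fun h' => hne (h.symm.trans h')⟩
    exact (mul_pos hμw hθw).trans_le (h1.le_tsum w fun z _ => mul_nonneg (hμ z) (hθ z))
  obtain ⟨w, hμw, hθw⟩ : ∃ w, 0 < μ w ∧ θ w ≠ m := by
    by_cases h : θ z₀ = m
    · exact ⟨z₁, hz₁, h ▸ hne.symm⟩
    · exact ⟨z₀, hz₀, h⟩
  -- integrate the tangent line of `x ↦ x ^ r` at the mean
  have htangent : HasSum (fun z => μ z * (m ^ r + r * m ^ (r - 1) * (θ z - m))) (m ^ r) := by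
    have h := (hμ1.mul_left (m ^ r)).add
      ((h1.hasSum.sub (hμ1.mul_left m)).mul_left (r * m ^ (r - 1)))
    rw [mul_one, mul_one, sub_self, mul_zero, add_zero] at h
    exact h.congr_fun fun z => by ring
  exact hasSum_lt (fun z => mul_le_mul_of_nonneg_left (pow_tangent_le_pow hm (hθ z) hr) (hμ z))
    (mul_lt_mul_of_pos_left (pow_tangent_lt_pow hm (hθ w) hθw hr) hμw) htangent hrsum.hasSum

end Jensen

theorem ghd_mixture_strict_overdispersion_general {Z : Type*}
    {P Q : ℕ} (a : Fin P → ℝ) (b : Fin Q → ℝ)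
    (ha : ∀ i, 0 < a i) (hb : ∀ l, 0 < b l)
    (μ : Z → ℝ) (hμ : ∀ z, 0 ≤ μ z) (hμsum : Summable μ) (hμ1 : (∑' z, μ z) = 1)
    (θ : Z → ℝ) (hθ : ∀ z, 0 < θ z)
    (p : Z → ℕ → ℝ) (hp : ∀ z, IsGHD a b (θ z) (p z))
    (q : ℕ → ℝ) (hq : ∀ k, q k = ∑' z, μ z * p z k)
    (r : ℕ) (hr : 2 ≤ r) (hmom : Summable (fun z => μ z * θ z ^ r))
    (hnd : ∃ z z' : Z, 0 < μ z ∧ 0 < μ z' ∧ θ z ≠ θ z') :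
    (∑' k : ℕ, (k.descFactorial r : ℝ) * q k)
      > (∑' k : ℕ, (k : ℝ) * q k) ^ r
          * (∏ i, risingFact (a i) r / (a i) ^ r)
          * (∏ l, (b l) ^ r / risingFact (b l) r) := by
  obtain rfl : q = fun k => ∑' z, μ z * p z k := funext hq
  have hθ1 : Summable fun z => μ z * θ z ^ 1 :=
    summable_mul_pow_of_le hμ (fun z => (hθ z).le) hμsum (by omega) hmom
  have hmean := hasSum_descFactorial_mul_ghd_mixture hμ hμsum hp hθ1
  have hfact := hasSum_descFactorial_mul_ghd_mixture hμ hμsum hp hmom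
  simp only [Nat.descFactorial_one, pow_one] at hmean hθ1
  have hjensen := pow_tsum_mul_lt_tsum_mul_pow hμ (hμ1 ▸ hμsum.hasSum) (fun z => (hθ z).le) hθ1
    hr hmom hnd
  rw [gt_iff_lt, hfact.tsum_eq, hmean.tsum_eq]
  calc (ghdCoeff a b 1 * ∑' z, μ z * θ z) ^ r * (∏ i, risingFact (a i) r / a i ^ r)
        * (∏ l, b l ^ r / risingFact (b l) r)
      = ghdCoeff a b r * (∑' z, μ z * θ z) ^ r := by
        rw [← ghdCoeff_one_pow_mul (fun i => (ha i).ne') (fun l => (hb l).ne') r]; ring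
    _ < ghdCoeff a b r * ∑' z, μ z * θ z ^ r :=
        mul_lt_mul_of_pos_left hjensen (ghdCoeff_pos ha hb r)

/-- **identifiability engine for GHD DAG models.** Let `μ` be a pmf on a
countable set `Z`, `θ : Z → (0, ∞)`, and for each `z` let `p z` be a pmf on `ℕ` following
`GHD(a, b, θ(z))` with parameter vectors `a`, `b` not depending on `z`. Let
`q(k) = ∑_z μ(z) p_z(k)` be the mixture. If `r ≥ 2`, `∑_z μ(z) θ(z)^r < ∞`, and `θ` is
non-degenerate on the support of `μ`, then the `r`-th factorial moment of `q` strictly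
exceeds `f⁽ʳ⁾` evaluated at the mean of `q`:
`∑ₖ (k)ᵣ q(k) > (∑ₖ k q(k))^r ∏ᵢ (⟨aᵢ⟩^r/aᵢ^r) ∏ₗ (bₗ^r/⟨bₗ⟩^r)`. -/
theorem ghd_mixture_strict_overdispersion {Z : Type*} [Countable Z]
    {P Q : ℕ} (a : Fin P → ℝ) (b : Fin Q → ℝ)
    (ha : ∀ i, 0 < a i) (hb : ∀ l, 0 < b l)
    (μ : Z → ℝ) (hμ : ∀ z, 0 ≤ μ z) (hμsum : Summable μ) (hμ1 : (∑' z, μ z) = 1)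
    (θ : Z → ℝ) (hθ : ∀ z, 0 < θ z)
    (p : Z → ℕ → ℝ) (hp : ∀ z, IsGHD a b (θ z) (p z))
    (q : ℕ → ℝ) (hq : ∀ k, q k = ∑' z, μ z * p z k)
    (r : ℕ) (hr : 2 ≤ r) (hmom : Summable (fun z => μ z * θ z ^ r))
    (hnd : ∃ z z' : Z, 0 < μ z ∧ 0 < μ z' ∧ θ z ≠ θ z') :
    (∑' k : ℕ, (k.descFactorial r : ℝ) * q k)
      > (∑' k : ℕ, (k : ℝ) * q k) ^ r
          * (∏ i, risingFact (a i) r / (a i) ^ r)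
          * (∏ l, (b l) ^ r / risingFact (b l) r) :=
  ghd_mixture_strict_overdispersion_general a b ha hb μ hμ hμsum hμ1 θ hθ p hp q hq r hr hmom hnd
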